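/- A Hamiltonian cycle system of order v (a set of Hamiltonian cycles of the complete graph K_v whose edges partition the edge set of K_v) exists if and only if v is odd and v ≥ 3. -/

import Mathlib

open Pointwise

variable {V : Type*}

/-- The action of a permutation on a simple graph by relabelling vertices. -/
instance permGraphAction : MulAction (Equiv.Perm V) (SimpleGraph V) where
  smul σ H := H.map σ.toEmbedding
  one_smul H := by
    show H.map (1 : Equiv.Perm V).toEmbedding = H
    ext a b
    simp [SimpleGraph.map_adj]
  mul_smul σ τ H := by
    ext a b
    show (H.map (σ * τ).toEmbedding).Adj a b ↔ ((H.map τ.toEmbedding).map σ.toEmbedding).Adj a b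
    simp only [SimpleGraph.map_adj (σ * τ).toEmbedding, SimpleGraph.map_adj σ.toEmbedding,
      SimpleGraph.map_adj τ.toEmbedding]
    simp only [SimpleGraph.map_adj, Equiv.coe_toEmbedding, Equiv.Perm.coe_mul,
      Function.comp_apply]
    constructor
    · rintro ⟨u, v, h, rfl, rfl⟩
      exact ⟨τ u, τ v, ⟨u, v, h, rfl, rfl⟩, rfl, rfl⟩
    · rintro ⟨-, -, ⟨u, v, h, rfl, rfl⟩, rfl, rfl⟩
      exact ⟨u, v, h, rfl, rfl⟩

lemma perm_smul_graph (σ : Equiv.Perm V) (H : SimpleGraph V) :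
    σ • H = H.map σ.toEmbedding := rfl

/-- A Hamiltonian cycle of the complete graph on `V`: a connected, 2-regular
(spanning) subgraph. -/
def IsHamCycle [Fintype V] (H : SimpleGraph V) : Prop :=
  H.Connected ∧ ∀ v : V, (H.neighborSet v).ncard = 2

/-- A Hamiltonian cycle system: a set of Hamiltonian cycles whose edge sets
partition the edge set of the complete graph. -/
def IsHCS [Fintype V] (𝓗 : Set (SimpleGraph V)) : Prop :=
  (∀ H ∈ 𝓗, IsHamCycle H) ∧
    ∀ e ∈ (⊤ : SimpleGraph V).edgeSet, ∃! H, H ∈ 𝓗 ∧ e ∈ H.edgeSet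

/-- The full automorphism group of a Hamiltonian cycle system, as the subgroup
of vertex permutations preserving the set of cycles. -/
def autHCS (𝓗 : Set (SimpleGraph V)) : Subgroup (Equiv.Perm V) :=
  MulAction.stabilizer (Equiv.Perm V) 𝓗

/-- The cycle graph traced by a map from `ZMod m` (consecutive residues are adjacent). -/
def cycleOn {W : Type*} (m : ℕ) (f : ZMod m → W) : SimpleGraph W :=
  SimpleGraph.fromRel (fun a b => ∃ i : ZMod m, f i = a ∧ f (i + 1) = b)

/-!
Necessity: a Hamiltonian cycle has at least three vertices, and at any vertex `x` the cycles of
the system split the `v - 1` edges at `x` into pairs, so `v` is odd.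

Sufficiency is Walecki's construction on `ZMod (2n) ∪ {∞}`: the `k`-th cycle
`∞, k, k + 1, k - 1, k + 2, k - 2, …, k + n, ∞` consists of the pairs whose sum is `2k` or
`2k + 1`, where `∞` counts as a copy of its partner (so `∞` is joined to the two solutions of
`a + a = 2k`, namely `k` and `k + n`). Every residue is `2k` or `2k + 1` for exactly one `k < n`,
so every edge lies on exactly one cycle.
-/

open SimpleGraph

section HamiltonianCycleSystems

variable {W : Type*} [Fintype V] [Fintype W]

lemma IsHamCycle.of_iso {G : SimpleGraph V} {G' : SimpleGraph W} (f : G ≃g G')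
    (h : IsHamCycle G) : IsHamCycle G' := by
  refine ⟨f.connected_iff.mp h.1, fun w => ?_⟩
  rw [← f.apply_symm_apply w, ← f.image_neighborSet, Set.ncard_image_of_injective _ f.injective]
  exact h.2 _

lemma IsHamCycle.three_le_card {H : SimpleGraph V} (h : IsHamCycle H) :
    3 ≤ Fintype.card V := by
  obtain ⟨x⟩ := h.1.nonempty
  calc 3 = (insert x (H.neighborSet x)).ncard := by
        rw [Set.ncard_insert_of_notMem H.notMem_neighborSet_self, h.2 x]
    _ ≤ Fintype.card V := by
        rw [← Nat.card_eq_fintype_card, ← Set.ncard_univ]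
        exact Set.ncard_le_ncard (Set.subset_univ _)

lemma IsHCS.card_eq_two_mul_ncard_add_one {𝓗 : Set (SimpleGraph V)} (h : IsHCS 𝓗) (x : V) :
    Fintype.card V = 2 * 𝓗.ncard + 1 := by
  classical
  let T := (Set.toFinite 𝓗).toFinset
  have hcover : Finset.univ.erase x = T.biUnion (fun H => H.neighborFinset x) := by
    ext y
    simp only [Finset.mem_erase, Finset.mem_univ, and_true, Finset.mem_biUnion,
      Set.Finite.mem_toFinset, mem_neighborFinset, T]
    refine ⟨fun hy => ?_, fun ⟨H, _, hxy⟩ => hxy.ne'⟩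
    obtain ⟨H, ⟨hH, hxy⟩, -⟩ := h.2 s(x, y) (by simpa using hy.symm)
    exact ⟨H, hH, hxy⟩
  have hdisj : (T : Set (SimpleGraph V)).PairwiseDisjoint (fun H => H.neighborFinset x) := by
    intro H₁ h₁ H₂ h₂ hne
    refine Finset.disjoint_left.mpr fun y hy₁ hy₂ => hne ?_
    rw [mem_neighborFinset] at hy₁ hy₂
    rw [Finset.mem_coe, Set.Finite.mem_toFinset] at h₁ h₂
    obtain ⟨H, -, huniq⟩ := h.2 s(x, y) (by simpa using hy₁.ne)
    exact (huniq H₁ ⟨h₁, hy₁⟩).trans (huniq H₂ ⟨h₂, hy₂⟩).symm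
  have hdeg : ∀ H ∈ T, (H.neighborFinset x).card = 2 := fun H hH => by
    rw [← Set.ncard_coe_finset, coe_neighborFinset]
    exact (h.1 H ((Set.Finite.mem_toFinset _).mp hH)).2 x
  have := Finset.card_erase_of_mem (Finset.mem_univ x)
  rw [hcover, Finset.card_biUnion hdisj, Finset.sum_congr rfl hdeg, Finset.sum_const,
    smul_eq_mul, ← Set.ncard_eq_toFinset_card, Finset.card_univ] at this
  have := Fintype.card_pos_iff.mpr ⟨x⟩
  omega

lemma IsHCS.image_map_equiv (e : V ≃ W) {𝓗 : Set (SimpleGraph V)} (h : IsHCS 𝓗) :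
    IsHCS ((SimpleGraph.map e.toEmbedding) '' 𝓗) := by
  refine ⟨?_, fun f hf => ?_⟩
  · rintro _ ⟨H, hH, rfl⟩
    exact (h.1 H hH).of_iso (Iso.map e H)
  induction f using Sym2.ind with | _ x y => ?_
  simp_rw [Set.mem_image, ← comap_symm]
  obtain ⟨H, ⟨hH, hxy⟩, huniq⟩ := h.2 s(e.symm x, e.symm y) (by simpa using hf)
  refine ⟨_, ⟨⟨H, hH, rfl⟩, hxy⟩, ?_⟩
  rintro _ ⟨⟨H', hH', rfl⟩, hxy'⟩
  rw [huniq H' ⟨hH', hxy'⟩]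

end HamiltonianCycleSystems

namespace ZMod

variable {n : ℕ}

lemma add_self_ne_two_mul_add_one (a k : ZMod (2 * n)) : a + a ≠ 2 * k + 1 := by
  intro h
  have h2 := congrArg (ZMod.castHom (dvd_mul_right 2 n) (ZMod 2)) h
  simp only [map_add, map_mul, map_one, map_ofNat, CharTwo.add_self_eq_zero,
    CharTwo.two_eq_zero, zero_mul, zero_add] at h2
  exact zero_ne_one h2

lemma add_self_eq_zero_iff [NeZero n] (a : ZMod (2 * n)) : a + a = 0 ↔ a = 0 ∨ a = n := by
  have hn : n < 2 * n := by have := NeZero.pos n; omega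
  have ha := a.val_lt
  rw [← val_eq_zero, val_add, ← val_eq_zero, ← (val_injective _).eq_iff, val_natCast_of_lt hn]
  rcases lt_or_ge a.val n with h | h
  · rw [Nat.mod_eq_of_lt (by omega)]; omega
  · rw [Nat.mod_eq_sub_mod (by omega), Nat.mod_eq_of_lt (by omega)]; omega

lemma existsUnique_eq_two_mul_or_two_mul_add_one [NeZero n] (s : ZMod (2 * n)) :
    ∃! k : Fin n, s = 2 * (k : ℕ) ∨ s = 2 * (k : ℕ) + 1 := by
  have hs := s.val_lt
  have hcast {m : ℕ} (hm : m < 2 * n) : s = m ↔ s.val = m :=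
    ⟨fun h => h ▸ val_natCast_of_lt hm, fun h => h ▸ (natCast_zmod_val s).symm⟩
  have hiff (k : Fin n) : s = 2 * (k : ℕ) ∨ s = 2 * (k : ℕ) + 1 ↔ s.val / 2 = k := by
    have h2k : (2 * (k : ℕ) : ZMod (2 * n)) = ((2 * k : ℕ) : ZMod (2 * n)) := by norm_cast
    rw [h2k, ← Nat.cast_succ, hcast (by omega), hcast (by omega)]
    omega
  exact ⟨⟨s.val / 2, by omega⟩, (hiff _).mpr rfl, fun k hk => Fin.ext ((hiff k).mp hk).symm⟩

lemma add_self_eq_two_mul_iff [NeZero n] (a k : ZMod (2 * n)) :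
    a + a = 2 * k ↔ a = k ∨ a = k + n := by
  rw [← sub_eq_zero, show a + a - 2 * k = (a - k) + (a - k) by ring, add_self_eq_zero_iff,
    sub_eq_zero, sub_eq_iff_eq_add']

lemma natCast_ne_zero_two_mul [NeZero n] : (n : ZMod (2 * n)) ≠ 0 := by
  rw [Ne, natCast_eq_zero_iff]
  have := NeZero.pos n
  exact fun h => by have := Nat.le_of_dvd this h; omega

end ZMod

-- `none` is the point `∞`; the value at `(none, none)` is never used.
def pairSum {R : Type*} [Add R] [Zero R] : Option R → Option R → R
  | some a, some b => a + b
  | some a, none | none, some a => a + a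
  | none, none => 0

lemma pairSum_comm {R : Type*} [AddCommMagma R] [Zero R] (x y : Option R) :
    pairSum x y = pairSum y x := by
  rcases x with _ | a <;> rcases y with _ | b <;> simp only [pairSum, add_comm]

namespace Walecki

variable (n : ℕ)

def cycle (k : ZMod (2 * n)) : SimpleGraph (Option (ZMod (2 * n))) where
  Adj x y := x ≠ y ∧ (pairSum x y = 2 * k ∨ pairSum x y = 2 * k + 1)
  symm := ⟨fun x y h => by rwa [ne_comm, pairSum_comm]⟩
  loopless := ⟨fun _ h => h.1 rfl⟩

variable {n}

lemma cycle_adj_some_some {k a b : ZMod (2 * n)} :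
    (cycle n k).Adj (some a) (some b) ↔ a ≠ b ∧ (a + b = 2 * k ∨ a + b = 2 * k + 1) := by
  simp [cycle, pairSum]

lemma cycle_adj_none_some {k a : ZMod (2 * n)} :
    (cycle n k).Adj none (some a) ↔ a + a = 2 * k := by
  simp [cycle, pairSum, ZMod.add_self_ne_two_mul_add_one]

lemma cycle_adj_some_none {k a : ZMod (2 * n)} :
    (cycle n k).Adj (some a) none ↔ a + a = 2 * k := by
  rw [adj_comm, cycle_adj_none_some]

lemma neighborSet_cycle_none [NeZero n] (k : ZMod (2 * n)) :
    (cycle n k).neighborSet none = {some k, some (k + n)} := by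
  ext (_ | a)
  · simp
  · simp [cycle_adj_none_some, ZMod.add_self_eq_two_mul_iff]

lemma neighborSet_cycle_some_of_add_self_eq (k a : ZMod (2 * n)) (h : a + a = 2 * k) :
    (cycle n k).neighborSet (some a) = {none, some (2 * k + 1 - a)} := by
  ext (_ | b)
  · simp [cycle_adj_some_none, h]
  · simp only [mem_neighborSet, cycle_adj_some_some, Set.mem_insert_iff, Set.mem_singleton_iff,
      Option.some.injEq, reduceCtorEq, false_or]
    have := ZMod.add_self_ne_two_mul_add_one a k
    grind

lemma neighborSet_cycle_some_of_add_self_ne (k a : ZMod (2 * n)) (h : a + a ≠ 2 * k) :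
    (cycle n k).neighborSet (some a) = {some (2 * k - a), some (2 * k + 1 - a)} := by
  ext (_ | b)
  · simp [cycle_adj_some_none, h]
  · simp only [mem_neighborSet, cycle_adj_some_some, Set.mem_insert_iff, Set.mem_singleton_iff,
      Option.some.injEq]
    have := ZMod.add_self_ne_two_mul_add_one a k
    grind

lemma ncard_neighborSet_cycle [NeZero n] (k : ZMod (2 * n)) (x : Option (ZMod (2 * n))) :
    ((cycle n k).neighborSet x).ncard = 2 := by
  rcases x with _ | a
  · rw [neighborSet_cycle_none, Set.ncard_pair]
    simpa using ZMod.natCast_ne_zero_two_mul (n := n)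
  by_cases h : a + a = 2 * k
  · rw [neighborSet_cycle_some_of_add_self_eq k a h, Set.ncard_pair (by simp)]
  · rw [neighborSet_cycle_some_of_add_self_ne k a h, Set.ncard_pair]
    refine fun heq => ZMod.add_self_ne_two_mul_add_one 0 k ?_
    linear_combination (2 * k + 1) * Option.some_injective _ heq

lemma reachable_none_some_add_natCast (k : ZMod (2 * n)) (m : ℕ) :
    (cycle n k).Reachable none (some (k + m)) := by
  induction m with
  | zero => exact Adj.reachable (cycle_adj_none_some.mpr (by ring))
  | succ m ih =>
    have hmirror : (cycle n k).Reachable (some (k + m)) (some (k - (m : ZMod (2 * n)))) := by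
      by_cases heq : k + m = k - m
      · rw [heq]
      · exact Adj.reachable (cycle_adj_some_some.mpr ⟨heq, Or.inl (by ring)⟩)
    have hstep : (cycle n k).Adj (some (k - (m : ZMod (2 * n)))) (some (k + (m + 1 : ℕ))) := by
      refine cycle_adj_some_some.mpr ⟨fun heq => ?_, Or.inr (by push_cast; ring)⟩
      refine ZMod.add_self_ne_two_mul_add_one (k - (m : ZMod (2 * n))) k ?_
      push_cast at heq
      linear_combination heq
    exact ih.trans (hmirror.trans hstep.reachable)

lemma cycle_connected [NeZero n] (k : ZMod (2 * n)) : (cycle n k).Connected := by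
  rw [connected_iff_exists_forall_reachable]
  refine ⟨none, ?_⟩
  rintro (_ | a)
  · rfl
  · simpa using reachable_none_some_add_natCast k (a - k).val

lemma isHamCycle_cycle [NeZero n] (k : ZMod (2 * n)) : IsHamCycle (cycle n k) :=
  ⟨cycle_connected k, ncard_neighborSet_cycle k⟩

lemma existsUnique_cycle_adj [NeZero n] {x y : Option (ZMod (2 * n))} (h : x ≠ y) :
    ∃! k : Fin n, (cycle n k).Adj x y := by
  simpa only [cycle, h, ne_eq, not_false_eq_true, true_and] using
    ZMod.existsUnique_eq_two_mul_or_two_mul_add_one (pairSum x y)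

lemma isHCS_range_cycle [NeZero n] : IsHCS (Set.range fun k : Fin n => cycle n k) := by
  refine ⟨fun _ ⟨k, hk⟩ => hk ▸ isHamCycle_cycle _, fun e he => ?_⟩
  induction e using Sym2.ind with | _ x y => ?_
  obtain ⟨k, hk, huniq⟩ := existsUnique_cycle_adj ((top_adj x y).mp he)
  refine ⟨_, ⟨⟨k, rfl⟩, hk⟩, ?_⟩
  rintro _ ⟨⟨j, rfl⟩, hj⟩
  rw [huniq j hj]

end Walecki

/-- A Hamiltonian cycle system of order `v` exists iff `v` is odd and `v ≥ 3`. -/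
theorem hcs_exists_iff (v : ℕ) :
    (∃ 𝓗 : Set (SimpleGraph (Fin v)), 𝓗.Nonempty ∧ IsHCS 𝓗) ↔ Odd v ∧ 3 ≤ v := by
  constructor
  · rintro ⟨𝓗, ⟨H, hH⟩, h𝓗⟩
    have h3 : 3 ≤ v := by simpa using (h𝓗.1 H hH).three_le_card
    have hodd : v = 2 * 𝓗.ncard + 1 := by
      simpa using h𝓗.card_eq_two_mul_ncard_add_one ⟨0, by omega⟩
    exact ⟨⟨_, hodd⟩, h3⟩
  · rintro ⟨⟨n, rfl⟩, h3⟩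
    have : NeZero n := ⟨by omega⟩
    let e : Option (ZMod (2 * n)) ≃ Fin (2 * n + 1) := Fintype.equivFinOfCardEq (by simp)
    exact ⟨_, (Set.range_nonempty _).image _, Walecki.isHCS_range_cycle.image_map_equiv e⟩
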